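/- For every integer T ≥ 1 and every x ∈ ℝ^T, the gradient of f̂_T is uniformly bounded in the supremum norm: ‖∇ f̂_T(x)‖_∞ ≤ 23. -/

import Mathlib

/-- Ψ(z) = 0 for z ≤ 1/2 and Ψ(z) = exp(1 − 1/(2z−1)²) for z > 1/2. -/
noncomputable def Psi (z : ℝ) : ℝ :=
  if z ≤ 1/2 then 0 else Real.exp (1 - 1/(2*z - 1)^2)

/-- Φ(z) = √e ∫_{−∞}^{z} exp(−t²/2) dt. -/
noncomputable def Phi (z : ℝ) : ℝ :=
  Real.sqrt (Real.exp 1) * ∫ t in Set.Iic z, Real.exp (-t^2/2)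

/-- The 1-based `i`-th coordinate of `x` (junk value 0 out of range): `coord x i = x_{i+1}`
in 0-based terms. -/
noncomputable def coord {T : ℕ} (x : EuclideanSpace ℝ (Fin T)) (i : ℕ) : ℝ :=
  if h : i < T then x ⟨i, h⟩ else 0

/-- f̂_T(x) = −Ψ(1)Φ(x₁) + Σ_{i=1}^{T−1} [Ψ(−x_i)Φ(−x_{i+1}) − Ψ(x_i)Φ(x_{i+1})],
where the 1-based coordinate x_i is `coord x (i-1)`. -/
noncomputable def fhat (T : ℕ) (x : EuclideanSpace ℝ (Fin T)) : ℝ :=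
  -(Psi 1) * Phi (coord x 0) +
    ∑ i ∈ Finset.Ico 1 T,
      (Psi (-(coord x (i-1))) * Phi (-(coord x i)) - Psi (coord x (i-1)) * Phi (coord x i))

/-!
The partial derivative of `f̂_T` in `x_j` only sees the two summands that contain `x_j`: through `Φ'`
in the one ending at `x_j` (for `j = 1`, the head term `-Ψ(1) Φ(x₁)`) and through `Ψ'` in the one
starting at `x_j`. As `Ψ` vanishes on `(-∞, 1/2]`, at most one of `Ψ(a)`, `Ψ(-a)` is nonzero, so the
two contributions are at most `sup Ψ · sup Φ' = e^{3/2} < 4.482` and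
`sup Ψ' · sup Φ = √(54/e) · √(2πe) = √(108π) < 18.43`.
-/

open Real Set MeasureTheory Filter Topology

lemma hasDerivAt_mul_max_zero (u : ℝ) :
    HasDerivAt (fun v : ℝ => v * max v 0) (2 * max u 0) u := by
  rcases lt_trichotomy u 0 with hu | rfl | hu
  · rw [max_eq_right hu.le, mul_zero]
    refine (hasDerivAt_const u 0).congr_of_eventuallyEq ?_
    filter_upwards [gt_mem_nhds hu] with v hv
    rw [max_eq_right hv.le, mul_zero]
  · rw [max_self, mul_zero, hasDerivAt_iff_tendsto_slope]
    have hslope : (fun v : ℝ => max v 0) =ᶠ[𝓝[≠] 0] slope (fun v : ℝ => v * max v 0) 0 := by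
      filter_upwards [self_mem_nhdsWithin] with v hv
      rw [slope_def_field, max_self, mul_zero, sub_zero, sub_zero,
        mul_div_cancel_left₀ _ hv]
    refine Tendsto.congr' hslope ?_
    exact ((continuous_id.max continuous_const).tendsto' (0 : ℝ) 0 (by simp)).mono_left
      nhdsWithin_le_nhds
  · rw [max_eq_left hu.le]
    refine ((hasDerivAt_id u).mul (hasDerivAt_id u)).congr_deriv (by simp only [id_eq, one_mul, mul_one]; ring)
      |>.congr_of_eventuallyEq ?_
    filter_upwards [lt_mem_nhds hu] with v hv
    rw [max_eq_left hv.le]; rfl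

noncomputable def Psi' (z : ℝ) : ℝ :=
  if z ≤ 1/2 then 0 else 4 / (2*z - 1)^3 * Psi z

lemma Psi_eq_exp_mul_expNegInvGlue (z : ℝ) :
    Psi z = exp 1 * expNegInvGlue ((2*z - 1) * max (2*z - 1) 0) := by
  rcases le_or_gt z (1/2) with hz | hz
  · rw [Psi, if_pos hz, max_eq_right (by linarith), mul_zero, expNegInvGlue.zero, mul_zero]
  · have hu : 0 < 2*z - 1 := by linarith
    rw [Psi, if_neg hz.not_ge, max_eq_left hu.le, expNegInvGlue, if_neg (not_le.2 (by positivity)),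
      ← exp_add]
    congr 1
    field_simp
    ring

lemma hasDerivAt_Psi (z : ℝ) : HasDerivAt Psi (Psi' z) z := by
  set q := (2*z - 1) * max (2*z - 1) 0
  have hq : HasDerivAt (fun y : ℝ => (2*y - 1) * max (2*y - 1) 0) (2 * max (2*z - 1) 0 * 2) z :=
    (hasDerivAt_mul_max_zero _).comp z (((hasDerivAt_id z).const_mul 2).sub_const 1
      |>.congr_deriv (by simp))
  have hglue : HasDerivAt expNegInvGlue ((q⁻¹)^2 * expNegInvGlue q) q := by
    simpa using expNegInvGlue.hasDerivAt_polynomial_eval_inv_mul 1 q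
  have h := ((hglue.comp z hq).const_mul (exp 1)).congr_of_eventuallyEq
    (Eventually.of_forall Psi_eq_exp_mul_expNegInvGlue)
  refine h.congr_deriv ?_
  rcases le_or_gt z (1/2) with hz | hz
  · rw [Psi', if_pos hz, max_eq_right (by linarith)]; ring
  · have hu : 0 < 2*z - 1 := by linarith
    have hqu : q = (2*z - 1) * (2*z - 1) := by simp only [q, max_eq_left hu.le]
    rw [Psi', if_neg hz.not_ge, Psi_eq_exp_mul_expNegInvGlue, max_eq_left hu.le, hqu]
    field_simp
    ring

lemma Psi_eq_zero {z : ℝ} (hz : z ≤ 1/2) : Psi z = 0 := if_pos hz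

lemma Psi'_eq_zero {z : ℝ} (hz : z ≤ 1/2) : Psi' z = 0 := if_pos hz

lemma Psi_one : Psi 1 = 1 := by norm_num [Psi]

lemma Psi_nonneg (z : ℝ) : 0 ≤ Psi z := by
  unfold Psi; split_ifs
  · exact le_rfl
  · positivity

lemma Psi_le_exp_one (z : ℝ) : Psi z ≤ exp 1 := by
  unfold Psi; split_ifs
  · positivity
  · exact exp_le_exp.2 (sub_le_self _ (by positivity))

lemma Psi'_nonneg (z : ℝ) : 0 ≤ Psi' z := by
  unfold Psi'; split_ifs with hz
  · exact le_rfl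
  · have : 0 < 2*z - 1 := by linarith
    have := Psi_nonneg z
    positivity

lemma Psi'_sq_le (z : ℝ) : Psi' z ^ 2 ≤ 54 * exp (-1) := by
  unfold Psi'; split_ifs with hz
  · norm_num; positivity
  have hu : 0 < 2*z - 1 := by linarith
  set s := 2 / (3 * (2*z - 1)^2) with hs_def
  have hs : 0 ≤ s * exp (-s) := by positivity
  -- `s e^{-s} ≤ e^{-1}`, cubed, is the whole estimate: `Ψ'² = 54 e² (s e^{-s})³`.
  have hcube : (s * exp (-s))^3 ≤ exp (-1) ^ 3 :=
    pow_le_pow_left₀ hs (mul_exp_neg_le_exp_neg_one s) 3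
  have hPsi' : (4 / (2*z - 1)^3 * Psi z)^2 = 54 * exp 2 * (s * exp (-s))^3 := by
    have hexp : exp (1 - 1 / (2*z - 1)^2) ^ 2 = exp 2 * exp (-s) ^ 3 := by
      rw [← exp_nat_mul, ← exp_nat_mul, ← exp_add]
      congr 1
      rw [hs_def]
      field_simp
      ring
    rw [Psi, if_neg hz, mul_pow, hexp, mul_pow, hs_def]
    field_simp
    ring
  have hexp : exp 2 * exp (-1) ^ 3 = exp (-1) := by
    rw [← exp_nat_mul, ← exp_add]; norm_num
  calc _ = 54 * exp 2 * (s * exp (-s))^3 := hPsi'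
    _ ≤ 54 * exp 2 * exp (-1) ^ 3 := by gcongr
    _ = 54 * exp (-1) := by rw [mul_assoc, hexp]

lemma Psi'_le (z : ℝ) : Psi' z ≤ 4.458 := by
  have h1 := Psi'_sq_le z
  have h2 : exp (-1) ≤ 0.36788 := by
    rw [exp_neg, inv_le_comm₀ (exp_pos 1) (by norm_num)]
    linarith [exp_one_gt_d9]
  nlinarith [Psi'_nonneg z]

lemma hasDerivAt_integral_Iic {f : ℝ → ℝ} (hf : Integrable f) (hfc : Continuous f) (z : ℝ) :
    HasDerivAt (fun y => ∫ t in Iic y, f t) (f z) z := by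
  have hsplit : ∀ y, ∫ t in Iic y, f t = (∫ t in Iic 0, f t) + ∫ t in (0 : ℝ)..y, f t := fun y => by
    rw [← intervalIntegral.integral_Iic_sub_Iic hf.integrableOn hf.integrableOn]
    ring
  refine HasDerivAt.congr_of_eventuallyEq ?_ (Eventually.of_forall hsplit)
  exact (intervalIntegral.integral_hasDerivAt_right hf.intervalIntegrable
    (hfc.stronglyMeasurableAtFilter _ _) hfc.continuousAt).const_add _

noncomputable def Phi' (z : ℝ) : ℝ := √(exp 1) * exp (-z^2/2)

lemma integrable_exp_neg_sq_div_two : Integrable (fun t : ℝ => exp (-t^2/2)) := by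
  simpa [neg_div, div_eq_inv_mul] using integrable_exp_neg_mul_sq (b := 1/2) (by norm_num)

lemma integral_exp_neg_sq_div_two : ∫ t : ℝ, exp (-t^2/2) = √(2 * π) := by
  have h : ∀ t : ℝ, -t^2/2 = -(1/2) * t^2 := fun t => by ring
  simp_rw [h, integral_gaussian]
  congr 1
  ring

lemma hasDerivAt_Phi (z : ℝ) : HasDerivAt Phi (Phi' z) z :=
  (hasDerivAt_integral_Iic integrable_exp_neg_sq_div_two (by fun_prop) z).const_mul _

lemma Phi_nonneg (z : ℝ) : 0 ≤ Phi z :=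
  mul_nonneg (sqrt_nonneg _) (setIntegral_nonneg measurableSet_Iic fun _ _ => (exp_pos _).le)

lemma Phi_le (z : ℝ) : Phi z ≤ √(exp 1) * √(2 * π) := by
  rw [Phi, ← integral_exp_neg_sq_div_two]
  exact mul_le_mul_of_nonneg_left (setIntegral_le_integral integrable_exp_neg_sq_div_two
    (Eventually.of_forall fun _ => (exp_pos _).le)) (sqrt_nonneg _)

lemma Phi'_nonneg (z : ℝ) : 0 ≤ Phi' z := by
  unfold Phi'; positivity

lemma Phi'_le (z : ℝ) : Phi' z ≤ √(exp 1) := by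
  unfold Phi'
  exact mul_le_of_le_one_right (sqrt_nonneg _) (exp_le_one_iff.2 (by nlinarith [sq_nonneg z]))

lemma abs_mul_neg_add_mul_le {f g : ℝ → ℝ} {A B : ℝ} (hf_zero : ∀ z ≤ 0, f z = 0)
    (hf : ∀ z, f z ∈ Icc 0 A) (hg : ∀ z, g z ∈ Icc 0 B) (a b : ℝ) :
    |f (-a) * g (-b) + f a * g b| ≤ A * B := by
  have hprod : ∀ c d, |f c * g d| ≤ A * B := fun c d => by
    rw [abs_of_nonneg (mul_nonneg (hf c).1 (hg d).1)]
    exact mul_le_mul (hf c).2 (hg d).2 (hg d).1 ((hf c).1.trans (hf c).2)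
  rcases le_total a 0 with ha | ha
  · simpa [hf_zero a ha] using hprod (-a) (-b)
  · simpa [hf_zero (-a) (by linarith)] using hprod a b

lemma sqrt_exp_one_le : √(exp 1) ≤ 1.6488 := by
  rw [sqrt_le_left (by norm_num)]
  linarith [exp_one_lt_d9]

lemma sqrt_two_mul_pi_le : √(2 * π) ≤ 2.5067 := by
  rw [sqrt_le_left (by norm_num)]
  linarith [pi_lt_d6]

noncomputable def chainTerm (a b : ℝ) : ℝ := Psi (-a) * Phi (-b) - Psi a * Phi b

noncomputable def chainTermDerivFst (a b : ℝ) : ℝ := -(Psi' (-a) * Phi (-b) + Psi' a * Phi b)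

noncomputable def chainTermDerivSnd (a b : ℝ) : ℝ := -(Psi (-a) * Phi' (-b) + Psi a * Phi' b)

lemma abs_chainTermDerivFst_le (a b : ℝ) : |chainTermDerivFst a b| ≤ 18.43 := by
  rw [chainTermDerivFst, abs_neg]
  refine (abs_mul_neg_add_mul_le (fun z hz => Psi'_eq_zero (by linarith))
    (fun z => ⟨Psi'_nonneg z, Psi'_le z⟩) (fun z => ⟨Phi_nonneg z, Phi_le z⟩) a b).trans ?_
  nlinarith [sqrt_exp_one_le, sqrt_two_mul_pi_le, sqrt_nonneg (exp 1), sqrt_nonneg (2 * π)]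

lemma abs_chainTermDerivSnd_le (a b : ℝ) : |chainTermDerivSnd a b| ≤ 4.482 := by
  rw [chainTermDerivSnd, abs_neg]
  refine (abs_mul_neg_add_mul_le (fun z hz => Psi_eq_zero (by linarith))
    (fun z => ⟨Psi_nonneg z, Psi_le_exp_one z⟩) (fun z => ⟨Phi'_nonneg z, Phi'_le z⟩) a b).trans ?_
  nlinarith [sqrt_exp_one_le, exp_one_lt_d9, sqrt_nonneg (exp 1)]

lemma hasFDerivAt_chainTerm {E : Type*} [NormedAddCommGroup E] [NormedSpace ℝ E]
    (u v : E →L[ℝ] ℝ) (x : E) :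
    HasFDerivAt (fun y => chainTerm (u y) (v y))
      (chainTermDerivFst (u x) (v x) • u + chainTermDerivSnd (u x) (v x) • v) x := by
  have hPsi := fun w : E →L[ℝ] ℝ => (hasDerivAt_Psi (w x)).comp_hasFDerivAt x w.hasFDerivAt
  have hPhi := fun w : E →L[ℝ] ℝ => (hasDerivAt_Phi (w x)).comp_hasFDerivAt x w.hasFDerivAt
  refine (((hPsi (-u)).mul (hPhi (-v))).sub ((hPsi u).mul (hPhi v))).congr_fderiv ?_
  ext y
  simp only [FunLike.coe_neg, Function.comp_apply, Pi.neg_apply, neg_apply, smul_neg, sub_apply,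
    add_apply, smul_apply, smul_eq_mul, chainTermDerivFst, chainTermDerivSnd]
  ring

lemma gradient_apply_eq_fderiv_single {ι : Type*} [Fintype ι] [DecidableEq ι]
    (f : EuclideanSpace ℝ ι → ℝ) (x : EuclideanSpace ℝ ι) (j : ι) :
    gradient f x j = fderiv ℝ f x (EuclideanSpace.single j 1) := by
  rw [← inner_gradient_left, EuclideanSpace.inner_single_right]
  simp

noncomputable def coordCLM (T k : ℕ) : EuclideanSpace ℝ (Fin T) →L[ℝ] ℝ :=
  if h : k < T then EuclideanSpace.proj (⟨k, h⟩ : Fin T) else 0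

lemma coordCLM_apply {T : ℕ} (k : ℕ) (x : EuclideanSpace ℝ (Fin T)) :
    coordCLM T k x = coord x k := by
  unfold coordCLM coord; split_ifs <;> rfl

lemma coord_single {T : ℕ} (j : Fin T) (k : ℕ) :
    coord (EuclideanSpace.single j (1 : ℝ)) k = if (j : ℕ) = k then 1 else 0 := by
  have := j.isLt
  unfold coord
  split_ifs with hk hjk hjk <;> simp_all [Fin.ext_iff]

lemma fhat_eq (T : ℕ) : fhat T = fun y => -(Psi 1) * Phi (coordCLM T 0 y) +
    ∑ i ∈ Finset.Ico 1 T, chainTerm (coordCLM T (i - 1) y) (coordCLM T i y) := by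
  simp only [coordCLM_apply]; rfl

lemma hasFDerivAt_fhat (T : ℕ) (x : EuclideanSpace ℝ (Fin T)) :
    HasFDerivAt (fhat T) (-(Psi 1) • (Phi' (coordCLM T 0 x) • coordCLM T 0) +
      ∑ i ∈ Finset.Ico 1 T,
        (chainTermDerivFst (coordCLM T (i - 1) x) (coordCLM T i x) • coordCLM T (i - 1) +
          chainTermDerivSnd (coordCLM T (i - 1) x) (coordCLM T i x) • coordCLM T i)) x := by
  rw [fhat_eq]
  exact (((hasDerivAt_Phi _).comp_hasFDerivAt x (coordCLM T 0).hasFDerivAt).const_mul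
    (-(Psi 1))).add (HasFDerivAt.fun_sum fun i _ =>
      hasFDerivAt_chainTerm (coordCLM T (i - 1)) (coordCLM T i) x)

lemma sum_Ico_mul_coord_single_sub_one {T : ℕ} (g : ℕ → ℝ) (j : Fin T) :
    ∑ i ∈ Finset.Ico 1 T, g i * coord (EuclideanSpace.single j 1) (i - 1) =
      if (j : ℕ) + 1 < T then g (j + 1) else 0 := by
  split_ifs with hj
  · rw [Finset.sum_eq_single_of_mem ((j : ℕ) + 1) (by simpa using hj)
      fun i hi hne => by rw [coord_single, if_neg (by rw [Finset.mem_Ico] at hi; omega), mul_zero]]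
    rw [coord_single, Nat.add_sub_cancel, if_pos rfl, mul_one]
  · refine Finset.sum_eq_zero fun i hi => ?_
    rw [Finset.mem_Ico] at hi
    rw [coord_single, if_neg (by omega), mul_zero]

lemma gradient_fhat_apply {T : ℕ} (x : EuclideanSpace ℝ (Fin T)) (j : Fin T) :
    gradient (fhat T) x j =
      (if (j : ℕ) = 0 then -(Psi 1 * Phi' (coord x 0))
        else chainTermDerivSnd (coord x (j - 1)) (coord x j)) +
      (if (j : ℕ) + 1 < T then chainTermDerivFst (coord x j) (coord x (j + 1)) else 0) := by
  rw [gradient_apply_eq_fderiv_single, (hasFDerivAt_fhat T x).fderiv]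
  simp only [add_apply, smul_apply, FunLike.coe_sum, Finset.sum_apply, coordCLM_apply, smul_eq_mul,
    Finset.sum_add_distrib, sum_Ico_mul_coord_single_sub_one]
  simp only [coord_single, mul_ite, mul_one, mul_zero, Finset.sum_ite_eq, Finset.mem_Ico]
  by_cases hj : (j : ℕ) = 0
  · simp only [hj, ↓reduceIte, zero_add, nonpos_iff_eq_zero, one_ne_zero, false_and, add_zero]
    ring
  · simp only [hj, ↓reduceIte, add_tsub_cancel_right, Nat.one_le_iff_ne_zero, ne_eq,
      not_false_eq_true, Fin.is_lt, and_self, zero_add]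
    ring

theorem fhat_grad_sup_bound_general (T : ℕ) (x : EuclideanSpace ℝ (Fin T))
    (j : Fin T) : |gradient (fhat T) x j| ≤ 23 := by
  have hhead : |-(Psi 1 * Phi' (coord x 0))| ≤ 4.482 := by
    rw [abs_neg, Psi_one, one_mul, abs_of_nonneg (Phi'_nonneg _)]
    linarith [Phi'_le (coord x 0), sqrt_exp_one_le]
  have hSnd : |if (j : ℕ) = 0 then -(Psi 1 * Phi' (coord x 0))
      else chainTermDerivSnd (coord x (j - 1)) (coord x j)| ≤ 4.482 := by
    split_ifs
    exacts [hhead, abs_chainTermDerivSnd_le _ _]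
  have hFst : |if (j : ℕ) + 1 < T then chainTermDerivFst (coord x j) (coord x (j + 1)) else 0|
      ≤ 18.43 := by
    split_ifs
    exacts [abs_chainTermDerivFst_le _ _, by norm_num]
  rw [gradient_fhat_apply]
  calc _ ≤ 4.482 + 18.43 := (abs_add_le _ _).trans (add_le_add hSnd hFst)
    _ ≤ 23 := by norm_num

/-- The gradient of f̂_T is uniformly bounded in the supremum norm: ‖∇f̂_T(x)‖_∞ ≤ 23,
i.e. every partial derivative has absolute value at most 23. -/
theorem fhat_grad_sup_bound (T : ℕ) (hT : 1 ≤ T) (x : EuclideanSpace ℝ (Fin T))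
    (j : Fin T) : |gradient (fhat T) x j| ≤ 23 :=
  fhat_grad_sup_bound_general T x j
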